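/- Let d ≥ 1 and let Q ⊂ ℝ^d be a centrally symmetric convex polytope, Q = -Q. Then there exists a set of at most 2d vertices of Q whose convex hull Q' satisfies Q ⊆ 3d · Q'. -/

import Mathlib

/-!
Let `k ≤ d` be the dimension of the span of the vertices of `Q`, and among the `k`-tuples of
vertices pick `v` maximising the Gram determinant, the squared volume of the parallelotope they
span. If a vertex is `s = ∑ cᵢ • vᵢ`, replacing `vᵢ` by `s` multiplies the Gram determinant by
`cᵢ ^ 2`, so maximality forces `|cᵢ| ≤ 1`. Then `s` is the average of the points
`k • cᵢ • vᵢ ∈ k • conv {±vᵢ}`, hence `Q ⊆ k • conv {±vᵢ}`; the `±vᵢ` are vertices because `Q = -Q`.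
-/

open Set Pointwise

namespace Matrix

variable {m n E : Type*} [Fintype n] [NormedAddCommGroup E] [InnerProductSpace ℝ E]

theorem gram_sum_smul (B : Matrix m n ℝ) (v : n → E) :
    gram ℝ (fun a => ∑ p, B a p • v p) = B * gram ℝ v * Bᵀ := by
  ext a b
  simp only [gram_apply, mul_apply, transpose_apply, sum_inner, inner_sum, real_inner_smul_left,
    real_inner_smul_right, Finset.sum_mul]
  exact Finset.sum_congr rfl fun p _ => Finset.sum_congr rfl fun q _ => by ring

theorem det_gram_update_sum_smul [DecidableEq n] (v : n → E) (i : n) (c : n → ℝ) :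
    (gram ℝ (Function.update v i (∑ j, c j • v j))).det = c i ^ 2 * (gram ℝ v).det := by
  have hupdate : Function.update v i (∑ j, c j • v j) =
      fun a => ∑ p, (1 : Matrix n n ℝ).updateRow i c a p • v p := by
    ext1 a
    rcases eq_or_ne a i with rfl | ha
    · simp
    · simp [ha, one_apply]
  have hdet : ((1 : Matrix n n ℝ).updateRow i c).det = c i := by
    have hrow : ∑ k, c k • (1 : Matrix n n ℝ) k = c := by ext; simp [one_apply]
    simpa [hrow] using det_updateRow_sum (1 : Matrix n n ℝ) i c
  rw [hupdate, gram_sum_smul, det_mul, det_mul, det_transpose, hdet]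
  ring

theorem abs_le_one_of_det_gram_update_le [DecidableEq n] {v : n → E} (hv : 0 < (gram ℝ v).det)
    {i : n} {c : n → ℝ}
    (hle : (gram ℝ (Function.update v i (∑ j, c j • v j))).det ≤ (gram ℝ v).det) :
    |c i| ≤ 1 := by
  rw [det_gram_update_sum_smul] at hle
  exact (sq_le_one_iff_abs_le_one _).1 (le_of_mul_le_mul_right (by simpa using hle) hv)

end Matrix

open Matrix Module Submodule

section LinearAlgebra

variable {K V : Type*} [Field K] [AddCommGroup V] [Module K V] [FiniteDimensional K V]

theorem exists_fin_linearIndependent_subset_span (S : Set V) :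
    ∃ (k : ℕ) (v : Fin k → V), (∀ i, v i ∈ S) ∧ LinearIndependent K v ∧
      S ⊆ span K (range v) := by
  obtain ⟨b, hbS, hbspan, hb⟩ := exists_linearIndependent K S
  have := hb.finite
  let e := (Finite.equivFin b).symm
  refine ⟨Nat.card b, Subtype.val ∘ e, fun i => hbS (e i).2, hb.comp e e.injective, ?_⟩
  rw [range_comp, e.range_eq_univ, image_univ, Subtype.range_coe, hbspan]
  exact subset_span

end LinearAlgebra

section InnerProductSpace

variable {E : Type*} [NormedAddCommGroup E] [InnerProductSpace ℝ E]

theorem Set.Finite.exists_family_forall_abs_coeff_le_one {ι : Type*} [Fintype ι] [DecidableEq ι]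
    {S : Set E} (hS : S.Finite) {v₀ : ι → E} (hv₀S : ∀ i, v₀ i ∈ S)
    (hv₀ : LinearIndependent ℝ v₀) (hspan : S ⊆ span ℝ (range v₀)) :
    ∃ v : ι → E, (∀ i, v i ∈ S) ∧
      ∀ s ∈ S, ∃ c : ι → ℝ, (∀ i, |c i| ≤ 1) ∧ ∑ i, c i • v i = s := by
  classical
  let F := Fintype.piFinset fun _ : ι => hS.toFinset
  have hmemF : ∀ w : ι → E, w ∈ F ↔ ∀ i, w i ∈ S := by simp [F]
  obtain ⟨v, hvF, hvmax⟩ := F.exists_max_image (fun w => (gram ℝ w).det) ⟨v₀, (hmemF v₀).2 hv₀S⟩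
  have hvS := (hmemF v).1 hvF
  have hvpos : 0 < (gram ℝ v).det :=
    (posDef_gram_of_linearIndependent hv₀).det_pos.trans_le (hvmax v₀ ((hmemF v₀).2 hv₀S))
  have hv := linearIndependent_of_det_gram_ne_zero hvpos.ne'
  have hspan_eq : span ℝ (range v) = span ℝ (range v₀) := by
    have := FiniteDimensional.span_of_finite ℝ (finite_range v₀)
    refine eq_of_le_of_finrank_le (span_le.2 (range_subset_iff.2 fun i => hspan (hvS i))) ?_
    rw [finrank_span_eq_card hv, finrank_span_eq_card hv₀]
  refine ⟨v, hvS, fun s hs => ?_⟩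
  obtain ⟨c, rfl⟩ := (mem_span_range_iff_exists_fun ℝ).1 (hspan_eq ▸ hspan hs)
  refine ⟨c, fun i => abs_le_one_of_det_gram_update_le hvpos (hvmax _ ((hmemF _).2 fun j => ?_)), rfl⟩
  rcases eq_or_ne j i with rfl | hj
  · simpa using hs
  · simpa [hj] using hvS j

end InnerProductSpace

section Convex

variable {E : Type*} [AddCommGroup E] [Module ℝ E] {C : Set E}

theorem Convex.smul_mem_of_abs_le_one (hC : Convex ℝ C) {x : E} (hx : x ∈ C) (hnx : -x ∈ C)
    {a : ℝ} (ha : |a| ≤ 1) : a • x ∈ C := by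
  obtain ⟨ha₁, ha₂⟩ := abs_le.1 ha
  convert hC hx hnx (a := (1 + a) / 2) (b := (1 - a) / 2) (by linarith) (by linarith) (by ring)
    using 1
  module

theorem Convex.sum_smul_mem_smul {ι : Type*} [Fintype ι] [Nonempty ι] (hC : Convex ℝ C)
    {v : ι → E} (hv : ∀ i, v i ∈ C) (hnv : ∀ i, -v i ∈ C) {c : ι → ℝ} (hc : ∀ i, |c i| ≤ 1)
    {t : ℝ} (ht : (Fintype.card ι : ℝ) ≤ t) : ∑ i, c i • v i ∈ t • C := by
  have hn : (0 : ℝ) < Fintype.card ι := by exact_mod_cast Fintype.card_pos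
  have ht₀ : 0 < t := hn.trans_le ht
  rw [mem_smul_set_iff_inv_smul_mem₀ ht₀.ne']
  have hsum : t⁻¹ • ∑ i, c i • v i =
      ∑ i, (Fintype.card ι : ℝ)⁻¹ • ((Fintype.card ι / t * c i) • v i) := by
    rw [Finset.smul_sum]
    refine Finset.sum_congr rfl fun i _ => ?_
    rw [smul_smul, smul_smul]
    congr 1
    field_simp
  rw [hsum]
  refine hC.sum_mem (fun _ _ => by positivity) (by simp [hn.ne']) fun i _ =>
    hC.smul_mem_of_abs_le_one (hv i) (hnv i) ?_
  rw [abs_mul, abs_of_pos (by positivity : (0 : ℝ) < Fintype.card ι / t)]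
  exact mul_le_one₀ ((div_le_one ht₀).2 ht) (abs_nonneg _) (hc i)

end Convex

section Polytope

variable {E : Type*} [AddCommGroup E] [Module ℝ E] [TopologicalSpace E] [T2Space E]
  [IsTopologicalAddGroup E] [ContinuousSMul ℝ E] [LocallyConvexSpace ℝ E]

theorem Set.Finite.convexHull_extremePoints_convexHull {V : Set E} (hV : V.Finite) :
    convexHull ℝ (extremePoints ℝ (convexHull ℝ V)) = convexHull ℝ V := by
  have hfin : (extremePoints ℝ (convexHull ℝ V)).Finite := hV.subset extremePoints_convexHull_subset
  simpa [(hfin.isClosed_convexHull ℝ).closure_eq] using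
    closure_convexHull_extremePoints (hV.isCompact_convexHull ℝ) (convex_convexHull ℝ V)

end Polytope

theorem Set.neg_extremePoints {𝕜 E : Type*} [Ring 𝕜] [PartialOrder 𝕜] [IsOrderedRing 𝕜]
    [AddCommGroup E] [Module 𝕜 E] (A : Set E) :
    -extremePoints 𝕜 A = extremePoints 𝕜 (-A) := by
  simpa [LinearEquiv.neg_apply] using image_extremePoints (LinearEquiv.neg 𝕜 : E ≃ₗ[𝕜] E) A

section Sparsification

variable {E : Type*} [NormedAddCommGroup E] [InnerProductSpace ℝ E] [FiniteDimensional ℝ E]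

theorem Set.Finite.exists_finset_card_le_two_mul_finrank_subset_smul_convexHull [Nontrivial E]
    {S : Set E} (hS : S.Finite) (hneg : ∀ x ∈ S, -x ∈ S) {t : ℝ} (ht : (finrank ℝ E : ℝ) ≤ t) :
    ∃ W : Finset E, (W : Set E) ⊆ S ∧ W.card ≤ 2 * finrank ℝ E ∧
      S ⊆ t • convexHull ℝ (W : Set E) := by
  classical
  obtain ⟨k, v₀, hv₀S, hv₀, hspan⟩ := exists_fin_linearIndependent_subset_span (K := ℝ) S
  obtain ⟨v, hvS, hcoeff⟩ := hS.exists_family_forall_abs_coeff_le_one hv₀S hv₀ hspan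
  have hk : k ≤ finrank ℝ E := by simpa using hv₀.fintype_card_le_finrank
  rcases k.eq_zero_or_pos with rfl | hkpos
  · have hS0 : ∀ s ∈ S, s = 0 := fun s hs => by
      obtain ⟨c, -, rfl⟩ := hcoeff s hs
      simp
    refine ⟨hS.toFinset, by simp, ?_, fun s hs => ?_⟩
    · have hcard : hS.toFinset.card ≤ 1 := Finset.card_le_one.2 fun a ha b hb => by
        rw [hS.mem_toFinset] at ha hb
        rw [hS0 a ha, hS0 b hb]
      have := finrank_pos (R := ℝ) (M := E)
      omega
    · rw [hS0 s hs, ← smul_zero t]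
      exact smul_mem_smul_set (subset_convexHull ℝ _ (by simpa [hS0 s hs] using hs))
  · have : Nonempty (Fin k) := ⟨⟨0, hkpos⟩⟩
    refine ⟨Finset.univ.image v ∪ Finset.univ.image (-v), ?_, ?_, fun s hs => ?_⟩
    · simp only [Finset.coe_union, Finset.coe_image, Finset.coe_univ, image_univ, union_subset_iff,
        range_subset_iff, Pi.neg_apply]
      exact ⟨hvS, fun i => hneg _ (hvS i)⟩
    · calc _ ≤ k + k := (Finset.card_union_le _ _).trans
            (add_le_add (Finset.card_image_le.trans (by simp)) (Finset.card_image_le.trans (by simp)))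
        _ ≤ 2 * finrank ℝ E := by omega
    · obtain ⟨c, hc, rfl⟩ := hcoeff s hs
      exact (convex_convexHull ℝ _).sum_smul_mem_smul (fun i => subset_convexHull ℝ _ (by simp))
        (fun i => subset_convexHull ℝ _ (by simp)) hc (by simpa using (Nat.cast_le.2 hk).trans ht)

end Sparsification

/-- If `Q ⊆ ℝ^d` is a centrally symmetric convex polytope (`Q = -Q`),
then there are at most `2d` vertices of `Q` whose convex hull `Q'`
satisfies `Q ⊆ 3d • Q'`. -/
theorem sparse_approx_symmetric_polytope (d : ℕ) (hd : 1 ≤ d)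
    (Q : Set (EuclideanSpace ℝ (Fin d)))
    (hQpoly : ∃ V : Finset (EuclideanSpace ℝ (Fin d)), Q = convexHull ℝ (V : Set (EuclideanSpace ℝ (Fin d))))
    (hQsymm : Q = -Q) :
    ∃ W : Finset (EuclideanSpace ℝ (Fin d)),
      (W : Set (EuclideanSpace ℝ (Fin d))) ⊆ Set.extremePoints ℝ Q ∧
      W.card ≤ 2 * d ∧
      Q ⊆ ((3 : ℝ) * d) • convexHull ℝ (W : Set (EuclideanSpace ℝ (Fin d))) := by
  obtain ⟨V, hV⟩ := hQpoly
  have hneg : ∀ x ∈ extremePoints ℝ Q, -x ∈ extremePoints ℝ Q := fun x hx => by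
    rwa [hQsymm, ← neg_extremePoints, neg_mem_neg]
  have : Nontrivial (EuclideanSpace ℝ (Fin d)) :=
    Module.nontrivial_of_finrank_pos (R := ℝ) (by rw [finrank_euclideanSpace_fin]; omega)
  have hfin : (extremePoints ℝ Q).Finite :=
    V.finite_toSet.subset (hV ▸ extremePoints_convexHull_subset)
  have hQ : convexHull ℝ (extremePoints ℝ Q) = Q := by
    rw [hV, V.finite_toSet.convexHull_extremePoints_convexHull]
  obtain ⟨W, hWS, hWcard, hSW⟩ :=
    hfin.exists_finset_card_le_two_mul_finrank_subset_smul_convexHull hneg (t := 3 * d)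
      (by rw [finrank_euclideanSpace_fin]; linarith [d.cast_nonneg (α := ℝ)])
  exact ⟨W, hWS, by simpa using hWcard, hQ ▸ convexHull_min hSW ((convex_convexHull ℝ _).smul _)⟩
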